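/- Let 1 < p < ∞, let E be a real Banach space, let (Ω,Σ,μ) be a measure space, and let T : E → L_p(μ) be a bounded linear operator. Then for every n ∈ ℕ and all x_1,…,x_n, y_1,…,y_n ∈ E, ‖⋁_{i=1}^n Tx_i − ⋁_{j=1}^n Ty_j‖_{L_p(μ)} ≤ ‖T‖ · ‖⋁_{i=1}^n δ_{x_i} − ⋁_{j=1}^n δ_{y_j}‖_p, where the suprema on the right-hand side are taken pointwise in H[E]. -/

import Mathlib

open scoped ENNReal

/-- A function `f : E* → ℝ` is positively homogeneous. -/
def PosHomog {E : Type*} [NormedAddCommGroup E] [NormedSpace ℝ E]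
    (f : (E →L[ℝ] ℝ) → ℝ) : Prop :=
  ∀ (c : ℝ), 0 ≤ c → ∀ φ : E →L[ℝ] ℝ, f (c • φ) = c * f φ

/-- The weak `q`-summing norm of a finite family in `E*`. -/
noncomputable def weakSumNorm {E : Type*} [NormedAddCommGroup E] [NormedSpace ℝ E]
    (q : ℝ) {n : ℕ} (xs : Fin n → (E →L[ℝ] ℝ)) : ℝ :=
  sSup ((fun x : E => (∑ k, |xs k x| ^ q) ^ (1 / q)) '' Metric.closedBall 0 1)

/-- The `(p,q)`-summing norm of `f : E* → ℝ`, with values in `[0,∞]`. -/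
noncomputable def pqNorm {E : Type*} [NormedAddCommGroup E] [NormedSpace ℝ E]
    (p q : ℝ) (f : (E →L[ℝ] ℝ) → ℝ) : ℝ≥0∞ :=
  ⨆ (n : ℕ) (xs : Fin n → (E →L[ℝ] ℝ)) (_ : weakSumNorm q xs ≤ 1),
    ENNReal.ofReal ((∑ k, |f (xs k)| ^ p) ^ (1 / p))

open MeasureTheory

/-
Split `Ω` into finitely many measurable pieces on which the maxima of the `T xᵢ` and of the `T yⱼ`
are attained at fixed indices `i₀`, `j₀` and `H = ⋁ᵢ T xᵢ - ⋁ⱼ T yⱼ` has constant sign. On each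
piece `S` the Hölder-dual functional `f ↦ ‖H 1_S‖_p^{1-p} ∫_S f |H|^{p-1}` is positive, so it
sends `⋁ᵢ T xᵢ` to its value at `T xᵢ₀` (and likewise for the `yⱼ`), and it norms `H 1_S`.
Composed with `T`, these functionals have `p`-sums at most `‖T‖` on the unit ball by Hölder's
inequality, while the `p`-sum of the values of `⋁ᵢ δ_{xᵢ} - ⋁ⱼ δ_{yⱼ}` on them is `‖H‖`.
-/

open Finset

section PositiveHomogeneity

variable {E : Type*} [NormedAddCommGroup E] [NormedSpace ℝ E]

lemma PosHomog.sub {f g : (E →L[ℝ] ℝ) → ℝ} (hf : PosHomog f) (hg : PosHomog g) :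
    PosHomog fun φ => f φ - g φ := fun c hc φ => by
  simp only [hf c hc, hg c hc, mul_sub]

lemma posHomog_sup'_apply {ι : Type*} {s : Finset ι} (hs : s.Nonempty) (x : ι → E) :
    PosHomog fun φ : E →L[ℝ] ℝ => s.sup' hs fun i => φ (x i) := fun c hc φ => by
  simp only [smul_apply, smul_eq_mul, mul₀_sup' hc]

lemma sum_abs_mul_rpow_rpow_one_div {K : Type*} [Fintype K] {p c : ℝ} (hp : 0 < p) (hc : 0 ≤ c)
    (a : K → ℝ) :
    (∑ k, |c * a k| ^ p) ^ (1 / p) = c * (∑ k, |a k| ^ p) ^ (1 / p) := by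
  simp_rw [abs_mul, abs_of_nonneg hc, Real.mul_rpow hc (abs_nonneg _), ← Finset.mul_sum]
  rw [Real.mul_rpow (by positivity) (by positivity), ← Real.rpow_mul hc, mul_one_div_cancel hp.ne',
    Real.rpow_one]

lemma PosHomog.rpow_sum_le_mul_pqNorm {F : (E →L[ℝ] ℝ) → ℝ} (hF : PosHomog F) {K : Type*}
    [Fintype K] {p C : ℝ} (hp : 0 < p) (hC : 0 < C) (φ : K → E →L[ℝ] ℝ)
    (hφ : ∀ z : E, ‖z‖ ≤ 1 → ∑ k, |φ k z| ^ p ≤ C ^ p) :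
    ENNReal.ofReal ((∑ k, |F (φ k)| ^ p) ^ (1 / p)) ≤ ENNReal.ofReal C * pqNorm p p F := by
  let e := Fintype.equivFin K
  let xs : Fin (Fintype.card K) → E →L[ℝ] ℝ := fun m => C⁻¹ • φ (e.symm m)
  have hxs : weakSumNorm p xs ≤ 1 := by
    refine Real.sSup_le ?_ zero_le_one
    rintro _ ⟨z, hz, rfl⟩
    have hsum : (∑ k, |φ k z| ^ p) ^ (1 / p) ≤ C := by
      refine (Real.rpow_le_rpow (by positivity) (hφ z (mem_closedBall_zero_iff.mp hz))
        (by positivity)).trans_eq ?_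
      rw [← Real.rpow_mul hC.le, mul_one_div_cancel hp.ne', Real.rpow_one]
    simp only [xs, smul_apply, smul_eq_mul]
    rw [e.symm.sum_comp (fun k => |C⁻¹ * φ k z| ^ p),
      sum_abs_mul_rpow_rpow_one_div hp (by positivity)]
    exact (inv_mul_le_one₀ hC).mpr hsum
  have hFxs : (∑ m, |F (xs m)| ^ p) ^ (1 / p) = C⁻¹ * (∑ k, |F (φ k)| ^ p) ^ (1 / p) := by
    simp only [xs, hF _ (inv_nonneg.mpr hC.le)]
    rw [e.symm.sum_comp (fun k => |C⁻¹ * F (φ k)| ^ p),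
      sum_abs_mul_rpow_rpow_one_div hp (by positivity)]
  calc ENNReal.ofReal ((∑ k, |F (φ k)| ^ p) ^ (1 / p))
      = ENNReal.ofReal C * ENNReal.ofReal ((∑ m, |F (xs m)| ^ p) ^ (1 / p)) := by
        rw [hFxs, ← ENNReal.ofReal_mul hC.le, mul_inv_cancel_left₀ hC.ne']
    _ ≤ ENNReal.ofReal C * pqNorm p p F := by
        gcongr
        exact le_iSup_of_le _ (le_iSup_of_le xs (le_iSup_of_le hxs le_rfl))

end PositiveHomogeneity

section FirstArgmax

lemma filter_forall_le_nonempty {ι α : Type*} [Fintype ι] [Nonempty ι] [LinearOrder α]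
    (g : ι → α) : (univ.filter fun i => ∀ j, g j ≤ g i).Nonempty := by
  obtain ⟨i, -, hi⟩ := exists_max_image univ g univ_nonempty
  exact ⟨i, mem_filter.mpr ⟨mem_univ i, fun j => hi j (mem_univ j)⟩⟩

variable {Ω ι α : Type*} [Fintype ι] [LinearOrder ι] [Nonempty ι] [LinearOrder α]

noncomputable def firstArgmax (g : ι → Ω → α) (ω : Ω) : ι :=
  (univ.filter fun i => ∀ j, g j ω ≤ g i ω).min' (filter_forall_le_nonempty fun i => g i ω)

lemma le_apply_firstArgmax (g : ι → Ω → α) (ω : Ω) (i : ι) : g i ω ≤ g (firstArgmax g ω) ω :=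
  (mem_filter.mp (min'_mem _ (filter_forall_le_nonempty fun i => g i ω))).2 i

lemma measurable_firstArgmax [MeasurableSpace Ω] [MeasurableSpace ι] {g : ι → Ω → α}
    (hg : ∀ i j, MeasurableSet {ω | g i ω ≤ g j ω}) : Measurable (firstArgmax g) := by
  have hle : ∀ i j, Measurable fun ω => g i ω ≤ g j ω := fun i j =>
    measurableSet_setOfPred.mp (hg i j)
  refine measurable_to_countable' fun i => ?_
  have hfiber : firstArgmax g ⁻¹' {i} =
      {ω | (∀ j, g j ω ≤ g i ω) ∧ ∀ b, (∀ j, g j ω ≤ g b ω) → i ≤ b} := by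
    ext ω
    simp [firstArgmax, min'_eq_iff]
  rw [hfiber, measurableSet_setOfPred]
  exact (Measurable.forall fun j => hle j i).and
    (Measurable.forall fun b => (Measurable.forall fun j => hle j b).imp measurable_const)

end FirstArgmax

namespace MeasureTheory

variable {Ω : Type*} [MeasurableSpace Ω] {μ : Measure Ω}

lemma sum_setIntegral_fiber {K G : Type*} [Fintype K] [MeasurableSpace K]
    [MeasurableSingletonClass K] [NormedAddCommGroup G] [NormedSpace ℝ G] {κ : Ω → K}
    (hκ : Measurable κ) {f : Ω → G} (hf : Integrable f μ) :
    ∑ k, ∫ ω in κ ⁻¹' {k}, f ω ∂μ = ∫ ω, f ω ∂μ := by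
  rw [← integral_iUnion_fintype (fun k => hκ (measurableSet_singleton k))
    (pairwise_disjoint_fiber κ) fun k => hf.integrableOn, ← Set.preimage_iUnion,
    Set.iUnion_of_singleton, Set.preimage_univ, Measure.restrict_univ]

lemma Lp.coeFn_finset_sup' {E : Type*} [NormedAddCommGroup E] [Lattice E] [HasSolidNorm E]
    [IsOrderedAddMonoid E] {q : ℝ≥0∞} {ι : Type*} {s : Finset ι} (hs : s.Nonempty)
    (f : ι → Lp E q μ) : ⇑(s.sup' hs f) =ᵐ[μ] fun ω => s.sup' hs fun i => f i ω := by
  induction hs using Nonempty.cons_induction with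
  | singleton i => simp
  | cons i s hi hs ih =>
    filter_upwards [Lp.coeFn_sup (f i) (s.sup' hs f), ih] with ω hsup hω
    simp only [sup'_cons hs, hsup, Pi.sup_apply, hω]

lemma Lp.finset_sup'_ae_eq_restrict_of_forall_le {E : Type*} [NormedAddCommGroup E] [Lattice E]
    [HasSolidNorm E] [IsOrderedAddMonoid E] {q : ℝ≥0∞} {ι : Type*} {s : Finset ι}
    (hs : s.Nonempty) {g : ι → Lp E q μ} {S : Set Ω} (hS : MeasurableSet S) {i₀ : ι}
    (hi₀ : i₀ ∈ s) (hmax : ∀ ω ∈ S, ∀ i ∈ s, g i ω ≤ g i₀ ω) :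
    ⇑(s.sup' hs g) =ᵐ[μ.restrict S] g i₀ := by
  filter_upwards [ae_restrict_of_ae (Lp.coeFn_finset_sup' hs g), ae_restrict_mem hS]
    with ω hω hωS
  rw [hω]
  exact le_antisymm (sup'_le _ _ fun i hi => hmax ω hωS i hi) (le_sup' (fun i => g i ω) hi₀)

variable {p : ℝ}

lemma Lp.memLp_abs_rpow_sub_one (hp : 1 < p) (H : Lp ℝ (ENNReal.ofReal p) μ) :
    MemLp (fun ω => |H ω| ^ (p - 1)) (ENNReal.ofReal p.conjExponent) μ := by
  have h := (Lp.memLp H).norm_rpow_div (ENNReal.ofReal (p - 1))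
  rwa [ENNReal.toReal_ofReal (by linarith), ← ENNReal.ofReal_div_of_pos (by linarith)] at h

lemma Lp.norm_rpow_eq_integral [Fact (1 ≤ ENNReal.ofReal p)] (f : Lp ℝ (ENNReal.ofReal p) μ) :
    ‖f‖ ^ p = ∫ ω, |f ω| ^ p ∂μ := by
  have hp : 0 < p := zero_lt_one.trans_le (ENNReal.one_le_ofReal.mp Fact.out)
  rw [Lp.norm_def, (Lp.memLp f).eLpNorm_eq_integral_rpow_norm (by simpa using hp)
    ENNReal.ofReal_ne_top, ENNReal.toReal_ofReal (by positivity), ENNReal.toReal_ofReal hp.le,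
    Real.rpow_inv_rpow (integral_nonneg fun ω => by positivity) hp.ne']
  simp only [Real.norm_eq_abs]

lemma Lp.integrable_abs_rpow (hp : 0 < p) (f : Lp ℝ (ENNReal.ofReal p) μ) :
    Integrable (fun ω => |f ω| ^ p) μ := by
  simpa [Real.norm_eq_abs, ENNReal.toReal_ofReal hp.le] using
    (Lp.memLp f).integrable_norm_rpow (by simpa using hp) ENNReal.ofReal_ne_top

lemma Lp.integrable_mul_abs_rpow_sub_one (hp : 1 < p) (f H : Lp ℝ (ENNReal.ofReal p) μ) :
    Integrable (fun ω => f ω * |H ω| ^ (p - 1)) μ := by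
  have :=
    ENNReal.holderConjugate_iff.mpr (Real.HolderConjugate.conjExponent hp).inv_add_inv_ennreal
  exact (Lp.memLp f).integrable_mul (Lp.memLp_abs_rpow_sub_one hp H)

lemma abs_setIntegral_mul_abs_rpow_sub_one_le (hp : 1 < p) (f H : Lp ℝ (ENNReal.ofReal p) μ)
    (S : Set Ω) :
    |∫ ω in S, f ω * |H ω| ^ (p - 1) ∂μ| ≤
      (∫ ω in S, |f ω| ^ p ∂μ) ^ (1 / p) * (∫ ω in S, |H ω| ^ p ∂μ) ^ (1 - 1 / p) := by
  have hpq := Real.HolderConjugate.conjExponent hp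
  have hweight : ∀ ω, |(|H ω| ^ (p - 1))| ^ p.conjExponent = |H ω| ^ p := fun ω => by
    rw [abs_of_nonneg (by positivity), ← Real.rpow_mul (abs_nonneg _), hpq.sub_one_mul_conj]
  have holder := integral_mul_norm_le_Lp_mul_Lq (μ := μ.restrict S) hpq
    ((Lp.memLp f).restrict S) ((Lp.memLp_abs_rpow_sub_one hp H).restrict S)
  simp only [Real.norm_eq_abs] at holder
  simp only [hweight, one_div, hpq.one_sub_inv] at holder ⊢
  refine (abs_integral_le_integral_abs).trans (le_of_eq_of_le ?_ holder)
  simp only [abs_mul]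

lemma abs_rpow_mul_setIntegral_mul_abs_rpow_sub_one_le (hp : 1 < p)
    (f H : Lp ℝ (ENNReal.ofReal p) μ) (S : Set Ω) :
    |(∫ ω in S, |H ω| ^ p ∂μ) ^ (1 / p - 1) * ∫ ω in S, f ω * |H ω| ^ (p - 1) ∂μ| ≤
      (∫ ω in S, |f ω| ^ p ∂μ) ^ (1 / p) := by
  set c := ∫ ω in S, |H ω| ^ p ∂μ
  have hc : 0 ≤ c := integral_nonneg fun ω => by positivity
  have hexp : 1 / p - 1 ≠ 0 := by
    rw [sub_ne_zero, ne_eq, div_eq_one_iff_eq (by linarith)]; exact hp.ne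
  rcases hc.eq_or_lt with hc0 | hcpos
  · rw [← hc0, Real.zero_rpow hexp, zero_mul, abs_zero]
    positivity
  calc |c ^ (1 / p - 1) * ∫ ω in S, f ω * |H ω| ^ (p - 1) ∂μ|
      ≤ c ^ (1 / p - 1) * ((∫ ω in S, |f ω| ^ p ∂μ) ^ (1 / p) * c ^ (1 - 1 / p)) := by
        rw [abs_mul, abs_of_nonneg (by positivity)]
        gcongr
        exact abs_setIntegral_mul_abs_rpow_sub_one_le hp f H S
    _ = (∫ ω in S, |f ω| ^ p ∂μ) ^ (1 / p) := by
        rw [mul_left_comm, ← Real.rpow_add hcpos, sub_add_sub_cancel', sub_self,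
          Real.rpow_zero, mul_one]

variable [Fact (1 ≤ ENNReal.ofReal p)]

-- The factor `(∫ ω in S, |H ω| ^ p ∂μ) ^ (1 / p - 1)` is `‖H 1_S‖_p ^ (1 - p)`, read as `0`
-- when `H = 0` a.e. on `S`.
noncomputable def normingFunctional (hp : 1 < p) (H : Lp ℝ (ENNReal.ofReal p) μ) (S : Set Ω) :
    Lp ℝ (ENNReal.ofReal p) μ →L[ℝ] ℝ :=
  LinearMap.mkContinuous
    { toFun := fun f =>
        (∫ ω in S, |H ω| ^ p ∂μ) ^ (1 / p - 1) * ∫ ω in S, f ω * |H ω| ^ (p - 1) ∂μ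
      map_add' := fun f g => by
        rw [← mul_add, ← integral_add (Lp.integrable_mul_abs_rpow_sub_one hp f H).integrableOn
          (Lp.integrable_mul_abs_rpow_sub_one hp g H).integrableOn]
        congr 1
        refine integral_congr_ae (ae_restrict_of_ae ?_)
        filter_upwards [Lp.coeFn_add f g] with ω hω
        rw [hω, Pi.add_apply, add_mul]
      map_smul' := fun a f => by
        rw [RingHom.id_apply, smul_eq_mul, mul_left_comm, ← integral_const_mul a]
        congr 1
        refine integral_congr_ae (ae_restrict_of_ae ?_)
        filter_upwards [Lp.coeFn_smul a f] with ω hω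
        rw [hω, Pi.smul_apply, smul_eq_mul, mul_assoc] }
    1 fun f => by
      rw [one_mul, Real.norm_eq_abs, LinearMap.coe_mk, AddHom.coe_mk]
      refine (abs_rpow_mul_setIntegral_mul_abs_rpow_sub_one_le hp f H S).trans ?_
      rw [← Real.rpow_le_rpow_iff (by positivity) (norm_nonneg f) (by linarith : 0 < p),
        ← Real.rpow_mul (integral_nonneg fun ω => by positivity),
        one_div_mul_cancel (by linarith), Real.rpow_one, Lp.norm_rpow_eq_integral]
      exact setIntegral_le_integral (Lp.integrable_abs_rpow (by linarith) f)
        (Filter.Eventually.of_forall fun ω => by positivity)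

lemma normingFunctional_apply (hp : 1 < p) (H : Lp ℝ (ENNReal.ofReal p) μ) (S : Set Ω)
    (f : Lp ℝ (ENNReal.ofReal p) μ) :
    normingFunctional hp H S f =
      (∫ ω in S, |H ω| ^ p ∂μ) ^ (1 / p - 1) * ∫ ω in S, f ω * |H ω| ^ (p - 1) ∂μ :=
  rfl

section NormingFunctional

variable (hp : 1 < p) (H : Lp ℝ (ENNReal.ofReal p) μ)

lemma abs_normingFunctional_rpow_le (S : Set Ω) (f : Lp ℝ (ENNReal.ofReal p) μ) :
    |normingFunctional hp H S f| ^ p ≤ ∫ ω in S, |f ω| ^ p ∂μ := by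
  refine (Real.rpow_le_rpow (abs_nonneg _)
    (abs_rpow_mul_setIntegral_mul_abs_rpow_sub_one_le hp f H S) (by linarith)).trans_eq ?_
  rw [← Real.rpow_mul (integral_nonneg fun ω => by positivity), one_div_mul_cancel (by linarith),
    Real.rpow_one]

lemma normingFunctional_mono {S : Set Ω} {f g : Lp ℝ (ENNReal.ofReal p) μ}
    (hfg : f ≤ᵐ[μ.restrict S] g) : normingFunctional hp H S f ≤ normingFunctional hp H S g := by
  rw [normingFunctional_apply, normingFunctional_apply]
  refine mul_le_mul_of_nonneg_left ?_ (by positivity)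
  exact setIntegral_mono_ae_restrict (Lp.integrable_mul_abs_rpow_sub_one hp f H).integrableOn
    (Lp.integrable_mul_abs_rpow_sub_one hp g H).integrableOn
    (hfg.mono fun ω hω => mul_le_mul_of_nonneg_right hω (by positivity))

lemma normingFunctional_congr {S : Set Ω} {f g : Lp ℝ (ENNReal.ofReal p) μ}
    (hfg : f =ᵐ[μ.restrict S] g) : normingFunctional hp H S f = normingFunctional hp H S g :=
  le_antisymm (normingFunctional_mono hp H hfg.le) (normingFunctional_mono hp H hfg.symm.le)

lemma abs_normingFunctional_self {S : Set Ω} (hS : MeasurableSet S)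
    (hsign : (∀ ω ∈ S, 0 ≤ H ω) ∨ ∀ ω ∈ S, H ω ≤ 0) :
    |normingFunctional hp H S H| = (∫ ω in S, |H ω| ^ p ∂μ) ^ (1 / p) := by
  set c := ∫ ω in S, |H ω| ^ p ∂μ
  have hc : 0 ≤ c := integral_nonneg fun ω => by positivity
  have hpow : ∀ t : ℝ, |t| * |t| ^ (p - 1) = |t| ^ p := fun t => by
    rw [← Real.rpow_one_add' (abs_nonneg t) (by linarith), add_sub_cancel]
  have hint : |∫ ω in S, H ω * |H ω| ^ (p - 1) ∂μ| = c := by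
    rcases hsign with hnonneg | hnonpos
    · rw [setIntegral_congr_fun hS (g := fun ω => |H ω| ^ p) fun ω hω => by
        dsimp only; rw [← hpow, abs_of_nonneg (hnonneg ω hω)]]
      exact abs_of_nonneg hc
    · rw [setIntegral_congr_fun hS (g := fun ω => -(|H ω| ^ p)) fun ω hω => by
        dsimp only; rw [← hpow, abs_of_nonpos (hnonpos ω hω), neg_mul, neg_neg],
        integral_neg, abs_neg]
      exact abs_of_nonneg hc
  rw [normingFunctional_apply, abs_mul, abs_of_nonneg (by positivity), hint,
    ← Real.rpow_add_one' hc (by rw [sub_add_cancel]; exact one_div_ne_zero (by linarith)),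
    sub_add_cancel]

variable {K : Type*} [Fintype K] [MeasurableSpace K] [MeasurableSingletonClass K] {κ : Ω → K}

lemma sum_abs_normingFunctional_fiber_rpow_le (hκ : Measurable κ)
    (f : Lp ℝ (ENNReal.ofReal p) μ) :
    ∑ k, |normingFunctional hp H (κ ⁻¹' {k}) f| ^ p ≤ ‖f‖ ^ p := by
  calc ∑ k, |normingFunctional hp H (κ ⁻¹' {k}) f| ^ p
      ≤ ∑ k, ∫ ω in κ ⁻¹' {k}, |f ω| ^ p ∂μ :=
        sum_le_sum fun k _ => abs_normingFunctional_rpow_le hp H _ f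
    _ = ‖f‖ ^ p := by
        rw [sum_setIntegral_fiber hκ (Lp.integrable_abs_rpow (by linarith) f),
          Lp.norm_rpow_eq_integral]

lemma sum_abs_normingFunctional_fiber_self_rpow (hκ : Measurable κ)
    (hsign : ∀ k, (∀ ω ∈ κ ⁻¹' {k}, 0 ≤ H ω) ∨ ∀ ω ∈ κ ⁻¹' {k}, H ω ≤ 0) :
    ∑ k, |normingFunctional hp H (κ ⁻¹' {k}) H| ^ p = ‖H‖ ^ p := by
  calc ∑ k, |normingFunctional hp H (κ ⁻¹' {k}) H| ^ p
      = ∑ k, ∫ ω in κ ⁻¹' {k}, |H ω| ^ p ∂μ := sum_congr rfl fun k _ => by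
        rw [abs_normingFunctional_self hp H (hκ (measurableSet_singleton k)) (hsign k),
          ← Real.rpow_mul (integral_nonneg fun ω => by positivity),
          one_div_mul_cancel (by linarith), Real.rpow_one]
    _ = ‖H‖ ^ p := by
        rw [sum_setIntegral_fiber hκ (Lp.integrable_abs_rpow (by linarith) H),
          Lp.norm_rpow_eq_integral]

end NormingFunctional

lemma sup'_normingFunctional_eq_of_forall_le (hp : 1 < p)
    (H : Lp ℝ (ENNReal.ofReal p) μ) {ι : Type*} {s : Finset ι} (hs : s.Nonempty)
    {g : ι → Lp ℝ (ENNReal.ofReal p) μ} {S : Set Ω} (hS : MeasurableSet S) {i₀ : ι}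
    (hi₀ : i₀ ∈ s) (hmax : ∀ ω ∈ S, ∀ i ∈ s, g i ω ≤ g i₀ ω) :
    s.sup' hs (fun i => normingFunctional hp H S (g i)) = normingFunctional hp H S (g i₀) :=
  le_antisymm (sup'_le _ _ fun i hi => normingFunctional_mono hp H
    (ae_restrict_of_forall_mem hS fun ω hω => hmax ω hω i hi))
    (le_sup' (fun i => normingFunctional hp H S (g i)) hi₀)

lemma normingFunctional_sup'_sub_sup' (hp : 1 < p) (H : Lp ℝ (ENNReal.ofReal p) μ) {ι : Type*}
    {s : Finset ι} (hs : s.Nonempty) {g h : ι → Lp ℝ (ENNReal.ofReal p) μ} {S : Set Ω}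
    (hS : MeasurableSet S) {i₀ j₀ : ι} (hi₀ : i₀ ∈ s) (hj₀ : j₀ ∈ s)
    (hgmax : ∀ ω ∈ S, ∀ i ∈ s, g i ω ≤ g i₀ ω) (hhmax : ∀ ω ∈ S, ∀ j ∈ s, h j ω ≤ h j₀ ω) :
    (s.sup' hs fun i => normingFunctional hp H S (g i)) -
        (s.sup' hs fun j => normingFunctional hp H S (h j)) =
      normingFunctional hp H S (s.sup' hs g - s.sup' hs h) := by
  rw [sup'_normingFunctional_eq_of_forall_le hp H hs hS hi₀ hgmax,
    sup'_normingFunctional_eq_of_forall_le hp H hs hS hj₀ hhmax, ← map_sub]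
  refine normingFunctional_congr hp H ?_
  filter_upwards [ae_restrict_of_ae (Lp.coeFn_sub (g i₀) (h j₀)),
    ae_restrict_of_ae (Lp.coeFn_sub (s.sup' hs g) (s.sup' hs h)),
    Lp.finset_sup'_ae_eq_restrict_of_forall_le hs hS hi₀ hgmax,
    Lp.finset_sup'_ae_eq_restrict_of_forall_le hs hS hj₀ hhmax] with ω hgh hsup hg hh
  rw [hgh, hsup, Pi.sub_apply, Pi.sub_apply, hg, hh]

theorem exists_norming_family_sup'_sub_sup' (hp : 1 < p)
    {ι : Type*} [Fintype ι] [LinearOrder ι] [Nonempty ι]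
    (g h : ι → Lp ℝ (ENNReal.ofReal p) μ) :
    ∃ N : ι × ι × Bool → Lp ℝ (ENNReal.ofReal p) μ →L[ℝ] ℝ,
      (∀ f, ∑ k, |N k f| ^ p ≤ ‖f‖ ^ p) ∧
      ∑ k, |(univ.sup' univ_nonempty fun i => N k (g i)) -
          univ.sup' univ_nonempty fun j => N k (h j)| ^ p =
        ‖univ.sup' univ_nonempty g - univ.sup' univ_nonempty h‖ ^ p := by
  let : MeasurableSpace ι := ⊤
  set H := univ.sup' univ_nonempty g - univ.sup' univ_nonempty h
  let κ : Ω → ι × ι × Bool := fun ω =>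
    (firstArgmax (fun i => ⇑(g i)) ω, firstArgmax (fun j => ⇑(h j)) ω, decide (0 ≤ H ω))
  have hmeas (f : Lp ℝ (ENNReal.ofReal p) μ) : Measurable f :=
    (Lp.stronglyMeasurable f).measurable
  have hκ : Measurable κ :=
    (measurable_firstArgmax fun i j => measurableSet_le (hmeas _) (hmeas _)).prodMk
      ((measurable_firstArgmax fun i j => measurableSet_le (hmeas _) (hmeas _)).prodMk
        (measurable_to_bool (by
          simpa only [Set.preimage, Set.mem_singleton_iff, decide_eq_true_eq] using
            measurableSet_le measurable_const (hmeas H))))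
  have hfiber {i j b ω} (hω : ω ∈ κ ⁻¹' {(i, j, b)}) :
      firstArgmax (fun i => ⇑(g i)) ω = i ∧ firstArgmax (fun j => ⇑(h j)) ω = j ∧
        decide (0 ≤ H ω) = b := by
    simpa [κ] using hω
  have hsign : ∀ k, (∀ ω ∈ κ ⁻¹' {k}, 0 ≤ H ω) ∨ ∀ ω ∈ κ ⁻¹' {k}, H ω ≤ 0 := by
    rintro ⟨i, j, (_ | _)⟩
    · exact .inr fun ω hω => le_of_lt (by simpa using (hfiber hω).2.2)
    · exact .inl fun ω hω => by simpa using (hfiber hω).2.2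
  refine ⟨fun k => normingFunctional hp H (κ ⁻¹' {k}),
    sum_abs_normingFunctional_fiber_rpow_le hp H hκ, ?_⟩
  rw [← sum_abs_normingFunctional_fiber_self_rpow hp H hκ hsign]
  refine sum_congr rfl fun ⟨i, j, b⟩ _ => ?_
  have hS := hκ (measurableSet_singleton (i, j, b))
  have hgmax : ∀ ω ∈ κ ⁻¹' {(i, j, b)}, ∀ i' ∈ univ, g i' ω ≤ g i ω := fun ω hω i' _ =>
    (hfiber hω).1 ▸ le_apply_firstArgmax (fun i => ⇑(g i)) ω i'
  have hhmax : ∀ ω ∈ κ ⁻¹' {(i, j, b)}, ∀ j' ∈ univ, h j' ω ≤ h j ω := fun ω hω j' _ =>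
    (hfiber hω).2.1 ▸ le_apply_firstArgmax (fun j => ⇑(h j)) ω j'
  rw [normingFunctional_sup'_sub_sup' hp H _ hS (mem_univ i) (mem_univ j) hgmax hhmax]

end MeasureTheory

theorem Lp_lattice_estimate_for_free_pConvex_norm
    (E : Type*) [NormedAddCommGroup E] [NormedSpace ℝ E]
    (p : ℝ) (hp : 1 < p) [Fact (1 ≤ ENNReal.ofReal p)]
    {Ω : Type*} [MeasurableSpace Ω] (μ : Measure Ω)
    (T : E →L[ℝ] Lp ℝ (ENNReal.ofReal p) μ)
    (n : ℕ) (x y : Fin (n + 1) → E) :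
    ENNReal.ofReal
        ‖((Finset.univ : Finset (Fin (n + 1))).sup' ⟨0, Finset.mem_univ 0⟩ fun i => T (x i)) -
          ((Finset.univ : Finset (Fin (n + 1))).sup' ⟨0, Finset.mem_univ 0⟩ fun j => T (y j))‖ ≤
      ENNReal.ofReal ‖T‖ *
        pqNorm p p (fun φ : E →L[ℝ] ℝ =>
          ((Finset.univ : Finset (Fin (n + 1))).sup' ⟨0, Finset.mem_univ 0⟩ fun i => φ (x i)) -
          ((Finset.univ : Finset (Fin (n + 1))).sup' ⟨0, Finset.mem_univ 0⟩ fun j => φ (y j))) := by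
  rcases eq_or_ne T 0 with rfl | hT
  · simp
  obtain ⟨N, hN, hNsup⟩ :=
    exists_norming_family_sup'_sub_sup' hp (fun i => T (x i)) (fun j => T (y j))
  have hF := (posHomog_sup'_apply univ_nonempty x).sub (posHomog_sup'_apply univ_nonempty y)
  have hNT (z : E) (hz : ‖z‖ ≤ 1) : ∑ k, |(N k ∘L T) z| ^ p ≤ ‖T‖ ^ p :=
    (hN (T z)).trans (Real.rpow_le_rpow (norm_nonneg _) (T.unit_le_opNorm z hz) (by linarith))
  calc _ = ENNReal.ofReal ((∑ k, |(univ.sup' univ_nonempty fun i => (N k ∘L T) (x i)) -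
          univ.sup' univ_nonempty fun j => (N k ∘L T) (y j)| ^ p) ^ (1 / p)) := by
        rw [← Real.rpow_rpow_inv (norm_nonneg _) (by linarith : p ≠ 0), one_div]
        exact congrArg _ (congrArg (· ^ p⁻¹) hNsup.symm)
    _ ≤ _ := hF.rpow_sum_le_mul_pqNorm (by linarith) (norm_pos_iff.mpr hT) _ hNT
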